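/- Let n ≥ 4 be an even integer, let k be an even integer with 1 < k < n−1, set a = cos(π/n) and x_k = cos(kπ/n). Then 𝓛_k(F_a;x) > 0 for every x ∈ [−1,1], where F_a(x) := (1+a)·(T_n(x) + 2 − ((x+2)/n²)·T_n′(x)) − (1/n²)·(1−x)·(n² − T_n′(x)) and 𝓛_k(f;x) := (1 − x_k·x)·f(x_k) + (1 − x_k²)·(x − x_k)·f′(x_k). -/

import Mathlib

/-! At `c = x_k` with `k` even, `T_n(c) = 1`, `T_n'(c) = 0` and, by Chebyshev's differential
equation, `(1 - c²) T_n''(c) = -n²`. Hence `F_a(c) = 2 + 3a + c` and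
`(1 - c²) F_a'(c) = (1 + a)(c + 2) + c - c²`. Since `|x - c| ≤ 1 - c x` on `[-1, 1]`, the
derivative term of `𝓛_k(F_a; x)` is dominated by the value term as soon as
`|(1 - c²) F_a'(c)| < F_a(c)`, and this reduces to `c < a` and `0 ≤ a`. -/

open Polynomial Real

/-- The `n`-th Chebyshev polynomial of the first kind, as a real polynomial. -/
noncomputable def chebT (n : ℕ) : Polynomial ℝ := Polynomial.Chebyshev.T ℝ (n : ℤ)

/-- `F_a(x) = (1+a)(T_n(x) + 2 - ((x+2)/n²) T_n'(x)) - (1/n²)(1-x)(n² - T_n'(x))`. -/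
noncomputable def F (n : ℕ) (a x : ℝ) : ℝ :=
  (1 + a) * ((chebT n).eval x + 2 - (x + 2) / (n : ℝ) ^ 2 * (derivative (chebT n)).eval x)
    - 1 / (n : ℝ) ^ 2 * (1 - x) * ((n : ℝ) ^ 2 - (derivative (chebT n)).eval x)

/-- `𝓛(c, f; x) = (1 - c x) f(c) + (1 - c²)(x - c) f'(c)`. -/
noncomputable def Lfun (c : ℝ) (f : ℝ → ℝ) (x : ℝ) : ℝ :=
  (1 - c * x) * f c + (1 - c ^ 2) * (x - c) * deriv f c

lemma abs_sub_le_one_sub_mul {x c : ℝ} (hx : x ∈ Set.Icc (-1) 1) (hc : c ∈ Set.Icc (-1) 1) :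
    |x - c| ≤ 1 - c * x := by
  obtain ⟨hx₁, hx₂⟩ := hx
  obtain ⟨hc₁, hc₂⟩ := hc
  rw [abs_sub_le_iff]
  constructor <;> nlinarith

lemma Lfun_pos_of_abs_lt {c : ℝ} {f : ℝ → ℝ} (hc : c ∈ Set.Ioo (-1) 1)
    (hf : |(1 - c ^ 2) * deriv f c| < f c) {x : ℝ} (hx : x ∈ Set.Icc (-1) 1) :
    0 < Lfun c f x := by
  have hcx : |x - c| ≤ 1 - c * x := abs_sub_le_one_sub_mul hx (Set.Ioo_subset_Icc_self hc)
  have hcx_pos : 0 < 1 - c * x := by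
    obtain ⟨hx₁, hx₂⟩ := hx
    obtain ⟨hc₁, hc₂⟩ := hc
    rcases le_total 0 c with h | h <;> nlinarith
  have hderiv : -((x - c) * ((1 - c ^ 2) * deriv f c)) < (1 - c * x) * f c :=
    calc -((x - c) * ((1 - c ^ 2) * deriv f c))
        ≤ |x - c| * |(1 - c ^ 2) * deriv f c| := by
          rw [← abs_mul]; exact neg_le_abs _
      _ ≤ (1 - c * x) * |(1 - c ^ 2) * deriv f c| := by gcongr
      _ < (1 - c * x) * f c := by gcongr
  unfold Lfun
  linarith

lemma one_sub_sq_mul_eval_derivative_derivative_chebT (n : ℕ) (x : ℝ) :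
    (1 - x ^ 2) * (derivative (derivative (chebT n))).eval x =
      x * (derivative (chebT n)).eval x - (n : ℝ) ^ 2 * (chebT n).eval x := by
  simpa [chebT] using Chebyshev.one_sub_X_sq_mul_iterate_derivative_T_eval (R := ℝ) n 0 x

lemma cos_nat_mul_pi_div_lt {j k n : ℕ} (hjk : j < k) (hkn : k ≤ n) :
    Real.cos (k * π / n) < Real.cos (j * π / n) := by
  have hn : (0 : ℝ) < n := by exact_mod_cast (hjk.trans_le hkn).pos
  have hjk' : (j : ℝ) < k := by exact_mod_cast hjk
  have hkn' : (k : ℝ) ≤ n := by exact_mod_cast hkn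
  apply Real.cos_lt_cos_of_nonneg_of_le_pi (by positivity)
  · rw [div_le_iff₀ hn]; nlinarith [Real.pi_pos]
  · gcongr

lemma cos_nat_mul_pi_div_mem_Ioo {k n : ℕ} (hk₀ : 0 < k) (hkn : k < n) :
    Real.cos (k * π / n) ∈ Set.Ioo (-1) 1 := by
  have hn : (n : ℝ) ≠ 0 := by exact_mod_cast (hk₀.trans hkn).ne'
  constructor
  · simpa [hn] using cos_nat_mul_pi_div_lt hkn le_rfl
  · simpa using cos_nat_mul_pi_div_lt hk₀ hkn.le

lemma cos_pi_div_nonneg {n : ℕ} (hn : 2 ≤ n) : 0 ≤ Real.cos (π / n) := by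
  have hn' : (2 : ℝ) ≤ n := by exact_mod_cast hn
  apply Real.cos_nonneg_of_mem_Icc
  constructor
  · linarith [div_pos Real.pi_pos (by positivity : (0 : ℝ) < n), Real.pi_pos]
  · gcongr

lemma eval_chebT_cos_nat_mul_pi_div {k n : ℕ} (hkn : k < n) (hk : Even k) :
    (chebT n).eval (Real.cos (k * π / n)) = 1 :=
  (Chebyshev.eval_T_real_eq_one_iff (by omega) _).mpr ⟨k, hkn.le, hk, rfl⟩

lemma eval_derivative_chebT_cos_nat_mul_pi_div {k n : ℕ} (hk₀ : 0 < k) (hkn : k < n) :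
    (derivative (chebT n)).eval (Real.cos (k * π / n)) = 0 := by
  rw [← Polynomial.deriv]
  exact (Chebyshev.isLocalExtr_T_real (by omega) hk₀ hkn).deriv_eq_zero

lemma hasDerivAt_F (n : ℕ) (a x : ℝ) :
    HasDerivAt (F n a)
      ((1 + a) * ((derivative (chebT n)).eval x
          - ((derivative (chebT n)).eval x
            + (x + 2) * (derivative (derivative (chebT n))).eval x) / (n : ℝ) ^ 2)
        + ((n : ℝ) ^ 2 - (derivative (chebT n)).eval x
          + (1 - x) * (derivative (derivative (chebT n))).eval x) / (n : ℝ) ^ 2) x := by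
  have hT := (chebT n).hasDerivAt x
  have hT' := (derivative (chebT n)).hasDerivAt x
  have hid := hasDerivAt_id x
  have h := (((hT.add_const 2).sub (((hid.add_const 2).div_const ((n : ℝ) ^ 2)).mul hT')).const_mul
    (1 + a)).sub ((((hid.const_sub 1).const_mul (1 / (n : ℝ) ^ 2)).mul (hT'.const_sub ((n : ℝ) ^ 2))))
  exact (show HasDerivAt (F n a) _ x from h).congr_deriv (by simp only [id]; ring)

lemma F_apply_of_eval_chebT_eq_one {n : ℕ} (hn : n ≠ 0) (a : ℝ) {c : ℝ}
    (hT : (chebT n).eval c = 1) (hT' : (derivative (chebT n)).eval c = 0) :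
    F n a c = 2 + 3 * a + c := by
  have : (n : ℝ) ^ 2 ≠ 0 := by positivity
  simp only [F, hT, hT']
  field_simp
  ring

lemma one_sub_sq_mul_deriv_F_apply_of_eval_chebT_eq_one {n : ℕ} (hn : n ≠ 0) (a : ℝ) {c : ℝ}
    (hT : (chebT n).eval c = 1) (hT' : (derivative (chebT n)).eval c = 0) :
    (1 - c ^ 2) * deriv (F n a) c = (1 + a) * (c + 2) + c - c ^ 2 := by
  have hT'' := one_sub_sq_mul_eval_derivative_derivative_chebT n c
  rw [hT, hT'] at hT''
  have : (n : ℝ) ^ 2 ≠ 0 := by positivity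
  rw [(hasDerivAt_F n a c).deriv, hT']
  field_simp
  linear_combination (1 - c - (1 + a) * (c + 2)) * hT''

theorem L_of_F_pos_even_k_general (n : ℕ) (k : ℕ) (hke : Even k)
    (hk1 : 1 < k) (hk2 : k < n - 1) (a : ℝ) (ha : a = Real.cos (π / n))
    (x : ℝ) (hx : x ∈ Set.Icc (-1 : ℝ) 1) :
    0 < Lfun (Real.cos (k * π / n)) (F n a) x := by
  have hkn : k < n := by omega
  have hc := cos_nat_mul_pi_div_mem_Ioo (by omega) hkn
  have hT := eval_chebT_cos_nat_mul_pi_div hkn hke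
  have hT' := eval_derivative_chebT_cos_nat_mul_pi_div (by omega) hkn
  have hca : Real.cos (k * π / n) < a := by
    simpa [ha] using cos_nat_mul_pi_div_lt hk1 hkn.le
  have ha₀ : 0 ≤ a := ha ▸ cos_pi_div_nonneg (by omega)
  refine Lfun_pos_of_abs_lt hc ?_ hx
  rw [F_apply_of_eval_chebT_eq_one (by omega) a hT hT',
    one_sub_sq_mul_deriv_F_apply_of_eval_chebT_eq_one (by omega) a hT hT', abs_lt]
  obtain ⟨hc₁, hc₂⟩ := hc
  constructor <;> nlinarith

/-- For even `n ≥ 4`, even `k` with `1 < k < n-1` and `a = cos(π/n)`,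
`𝓛_k(F_a;x) > 0` on `[-1,1]`. -/
theorem L_of_F_pos_even_k (n : ℕ) (hn : 4 ≤ n) (hne : Even n) (k : ℕ) (hke : Even k)
    (hk1 : 1 < k) (hk2 : k < n - 1) (a : ℝ) (ha : a = Real.cos (π / n))
    (x : ℝ) (hx : x ∈ Set.Icc (-1 : ℝ) 1) :
    0 < Lfun (Real.cos (k * π / n)) (F n a) x :=
  L_of_F_pos_even_k_general n k hke hk1 hk2 a ha x hx
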